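/- Let G = A × B × C with A = (ℤ/2)², B = ℤ/4, C = ℤ/3. Let π₁ be the faithful permutation representation of G given by left multiplication on the disjoint union of the coset spaces G/A and G/(B×C) (a set of 12 + 4 = 16 points), and let π₂ be the faithful permutation representation of G given by left multiplication on the disjoint union of G/B and G/(A×C) (also 16 points). Then the permutation polytopes P(π₁) and P(π₂) are affinely equivalent, but (G, π₁) and (G, π₂) are not effectively equivalent; that is, there is no automorphism φ of G such that Π₁ and Π₂ ∘ φ are stably equivalent. -/

import Mathlib

open Finset
open scoped Classical

/-- The permutation matrix of `σ ∈ Sym(α)`: entry `(i,j)` is `1` if `i = σ j`, else `0`. -/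
noncomputable def permMat {α : Type} (σ : Equiv.Perm α) : Matrix α α ℝ :=
  Matrix.of fun i j => if i = σ j then 1 else 0

lemma permMat_one {α : Type} : permMat (1 : Equiv.Perm α) = 1 := by
  ext i j; simp [permMat, Matrix.one_apply]; congr

lemma permMat_mul {α : Type} [Fintype α] (σ τ : Equiv.Perm α) :
    permMat (σ * τ) = permMat σ * permMat τ := by
  ext i j
  simp only [permMat, Matrix.mul_apply, Matrix.of_apply, Equiv.Perm.mul_apply]
  rw [Finset.sum_eq_single (τ j)]
  · simp; congr
  · intro k _ hk; simp [hk]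
  · simp

/-- The matrix representation induced by a permutation representation, on `ℝ^α`. -/
noncomputable def permRep {α : Type} [Fintype α] {G : Type} [Group G]
    (π : G →* Equiv.Perm α) : Representation ℝ G (α → ℝ) where
  toFun g := (permMat (π g)).mulVecLin
  map_one' := by simp [permMat_one]; rfl
  map_mul' g h := by simp [permMat_mul]; rfl

variable {G : Type} [Group G] [Fintype G]

/-- The affine kernel `ker°ρ` of a real representation `ρ` of `G`. -/
def affKer {V : Type} [AddCommGroup V] [Module ℝ V]
    (ρ : Representation ℝ G V) : Set (G → ℝ) :=
  {l | (∑ g : G, l g • (ρ g : V →ₗ[ℝ] V)) = 0 ∧ (∑ g : G, l g) = 0}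

/-- Direct sum (realized on the product space) of two representations. -/
def prodRep {V W : Type} [AddCommGroup V] [Module ℝ V] [AddCommGroup W] [Module ℝ W]
    (ρ : Representation ℝ G V) (σ : Representation ℝ G W) :
    Representation ℝ G (V × W) where
  toFun g := (ρ g).prodMap (σ g)
  map_one' := by ext <;> simp
  map_mul' g h := by ext <;> simp

/-- Isomorphism of `G`-representations. -/
def RepIso {V W : Type} [AddCommGroup V] [Module ℝ V] [AddCommGroup W] [Module ℝ W]
    (ρ : Representation ℝ G V) (σ : Representation ℝ G W) : Prop :=
  ∃ e : V ≃ₗ[ℝ] W, ∀ (g : G) (v : V), e (ρ g v) = σ g (e v)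

/-- Stable equivalence of real representations. -/
def StablyEquivalent {V W : Type} [AddCommGroup V] [Module ℝ V] [AddCommGroup W] [Module ℝ W]
    (ρ₁ : Representation ℝ G V) (ρ₂ : Representation ℝ G W) : Prop :=
  ∃ (V' : Type) (_ : AddCommGroup V') (_ : Module ℝ V') (ρ₁' : Representation ℝ G V')
    (W' : Type) (_ : AddCommGroup W') (_ : Module ℝ W') (ρ₂' : Representation ℝ G W'),
    affKer ρ₁ ⊆ affKer ρ₁' ∧ affKer ρ₂ ⊆ affKer ρ₂' ∧
    RepIso (prodRep ρ₁ ρ₁') (prodRep ρ₂ ρ₂')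

/-- Affine equivalence of polytopes `P ⊆ E₁` and `Q ⊆ E₂`. -/
def AffinelyEquivalent {E₁ E₂ : Type} [AddCommGroup E₁] [Module ℝ E₁]
    [AddCommGroup E₂] [Module ℝ E₂] (P : Set E₁) (Q : Set E₂) : Prop :=
  ∃ (f : E₁ →ᵃ[ℝ] E₂) (g : E₂ →ᵃ[ℝ] E₁),
    f '' P = Q ∧
    (∀ x ∈ affineSpan ℝ P, g (f x) = x) ∧
    (∀ y ∈ affineSpan ℝ Q, f (g y) = y)

/-- The group `G = A × B × C` with `A = (ℤ/2)²`, `B = ℤ/4`, `C = ℤ/3`. -/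
abbrev GEx : Type := Multiplicative ((ZMod 2 × ZMod 2) × ZMod 4 × ZMod 3)

/-- The factor `A = (ℤ/2)²` as a subgroup of `G`. -/
def subA : Subgroup GEx :=
  AddSubgroup.toSubgroup
    ((⊤ : AddSubgroup (ZMod 2 × ZMod 2)).prod (⊥ : AddSubgroup (ZMod 4 × ZMod 3)))

/-- The factor `B × C = ℤ/4 × ℤ/3` as a subgroup of `G`. -/
def subBC : Subgroup GEx :=
  AddSubgroup.toSubgroup
    ((⊥ : AddSubgroup (ZMod 2 × ZMod 2)).prod (⊤ : AddSubgroup (ZMod 4 × ZMod 3)))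

/-- The factor `B = ℤ/4` as a subgroup of `G`. -/
def subB : Subgroup GEx :=
  AddSubgroup.toSubgroup
    ((⊥ : AddSubgroup (ZMod 2 × ZMod 2)).prod
      ((⊤ : AddSubgroup (ZMod 4)).prod (⊥ : AddSubgroup (ZMod 3))))

/-- The subgroup `A × C = (ℤ/2)² × ℤ/3` of `G`. -/
def subAC : Subgroup GEx :=
  AddSubgroup.toSubgroup
    ((⊤ : AddSubgroup (ZMod 2 × ZMod 2)).prod
      ((⊥ : AddSubgroup (ZMod 4)).prod (⊤ : AddSubgroup (ZMod 3))))

/-- `π₁` : `G` acting by left multiplication on the disjoint union `G/A ⊔ G/(B×C)`. -/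
noncomputable def piOne : GEx →* Equiv.Perm ((GEx ⧸ subA) ⊕ (GEx ⧸ subBC)) :=
  (Equiv.Perm.sumCongrHom (GEx ⧸ subA) (GEx ⧸ subBC)).comp
    ((MulAction.toPermHom GEx (GEx ⧸ subA)).prod (MulAction.toPermHom GEx (GEx ⧸ subBC)))

/-- `π₂` : `G` acting by left multiplication on the disjoint union `G/B ⊔ G/(A×C)`. -/
noncomputable def piTwo : GEx →* Equiv.Perm ((GEx ⧸ subB) ⊕ (GEx ⧸ subAC)) :=
  (Equiv.Perm.sumCongrHom (GEx ⧸ subB) (GEx ⧸ subAC)).comp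
    ((MulAction.toPermHom GEx (GEx ⧸ subB)).prod (MulAction.toPermHom GEx (GEx ⧸ subAC)))

/-!
For `G` acting on `G/H ⊔ G/K` with `H`, `K` normal, a combination `∑ λ_g M_g` of the permutation
matrices vanishes exactly when `λ` sums to zero over every coset of `H` and of `K`. A bijection
of `G` carrying the cosets of `A` to those of `B` and the cosets of `B × C` to those of `A × C`
therefore identifies the linear relations among the vertices of `P(π₁)` and `P(π₂)`, and the
polytopes are affinely equivalent.

Stable equivalence of `Π₁` and `Π₂ ∘ φ` forces `ker°(Π₂ ∘ φ) ⊆ ker°Π₁`. Take a character `χ` of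
`G` with kernel `A`. As `A` has exponent two while `B` and `A × C` contain elements `y` with
`y² ≠ 1`, `χ` is nontrivial on `φ⁻¹(B)` and on `φ⁻¹(A × C)`, so `Re χ` sums to zero over their
cosets and lies in `ker°(Π₂ ∘ φ)`; but its sum over `A` is `|A|`, so it is not in `ker°Π₁`.
-/

theorem LinearMap.exists_comp_eq_of_ker_le {K U V W : Type*} [DivisionRing K]
    [AddCommGroup U] [Module K U] [AddCommGroup V] [Module K V] [AddCommGroup W] [Module K W]
    (T : U →ₗ[K] V) (S : U →ₗ[K] W) (h : LinearMap.ker T ≤ LinearMap.ker S) :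
    ∃ f : V →ₗ[K] W, f ∘ₗ T = S := by
  obtain ⟨f, hf⟩ := IsSemisimpleModule.extension_property ((LinearMap.ker T).liftQ T le_rfl)
    (LinearMap.ker_eq_bot.1 (Submodule.ker_liftQ_eq_bot _ _ _ le_rfl))
    ((LinearMap.ker T).liftQ S h)
  exact ⟨f, LinearMap.ext fun u => by simpa using LinearMap.congr_fun hf (Submodule.mkQ _ u)⟩

theorem LinearMap.prodMap_eq_zero_iff {R V W V' W' : Type*} [Semiring R] [AddCommMonoid V]
    [Module R V] [AddCommMonoid W] [Module R W] [AddCommMonoid V'] [Module R V']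
    [AddCommMonoid W'] [Module R W'] (f : V →ₗ[R] V') (g : W →ₗ[R] W') :
    f.prodMap g = 0 ↔ f = 0 ∧ g = 0 := by
  refine ⟨fun h => ⟨?_, ?_⟩, fun ⟨hf, hg⟩ => by rw [hf, hg, LinearMap.prodMap_zero]⟩
  · ext v; simpa using congr(($h (v, 0)).1)
  · ext w; simpa using congr(($h (0, w)).2)

theorem LinearMap.apply_eq_self_of_mem_affineSpan_convexHull {ι V : Type*}
    [AddCommGroup V] [Module ℝ V] {v : ι → V} (T : V →ₗ[ℝ] V) (hT : ∀ i, T (v i) = v i)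
    {x : V} (hx : x ∈ affineSpan ℝ (convexHull ℝ (Set.range v))) : T x = x := by
  rw [affineSpan_convexHull] at hx
  refine LinearMap.eqOn_span (g := LinearMap.id) ?_ (affineSpan_le_toAffineSubspace_span hx)
  rintro _ ⟨i, rfl⟩
  exact hT i

theorem affinelyEquivalent_convexHull_range_of_apply_eq {ι V W : Type}
    [AddCommGroup V] [Module ℝ V] [AddCommGroup W] [Module ℝ W] {v : ι → V} {w : ι → W}
    (f : V →ₗ[ℝ] W) (g : W →ₗ[ℝ] V) (hf : ∀ i, f (v i) = w i) (hg : ∀ i, g (w i) = v i) :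
    AffinelyEquivalent (convexHull ℝ (Set.range v)) (convexHull ℝ (Set.range w)) := by
  refine ⟨f.toAffineMap, g.toAffineMap, ?_, fun x hx => ?_, fun y hy => ?_⟩
  · change f '' _ = _
    rw [f.image_convexHull, ← Set.range_comp, show ⇑f ∘ v = w from funext hf]
  · exact (g ∘ₗ f).apply_eq_self_of_mem_affineSpan_convexHull
      (fun i => by rw [LinearMap.comp_apply, hf, hg]) hx
  · exact (f ∘ₗ g).apply_eq_self_of_mem_affineSpan_convexHull
      (fun i => by rw [LinearMap.comp_apply, hg, hf]) hy

theorem affinelyEquivalent_convexHull_range_of_ker_eq {ι V W : Type} [Fintype ι]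
    [AddCommGroup V] [Module ℝ V] [AddCommGroup W] [Module ℝ W] (v : ι → V) (w : ι → W)
    (h : ∀ c : ι → ℝ, ∑ i, c i • v i = 0 ↔ ∑ i, c i • w i = 0) :
    AffinelyEquivalent (convexHull ℝ (Set.range v)) (convexHull ℝ (Set.range w)) := by
  have hker : LinearMap.ker (Fintype.linearCombination ℝ v)
      = LinearMap.ker (Fintype.linearCombination ℝ w) := by
    ext c
    simpa [Fintype.linearCombination_apply] using h c
  obtain ⟨f, hf⟩ := LinearMap.exists_comp_eq_of_ker_le _ _ hker.le
  obtain ⟨g, hg⟩ := LinearMap.exists_comp_eq_of_ker_le _ _ hker.ge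
  refine affinelyEquivalent_convexHull_range_of_apply_eq f g (fun i => ?_) (fun i => ?_)
  · simpa using LinearMap.congr_fun hf (Pi.single i 1)
  · simpa using LinearMap.congr_fun hg (Pi.single i 1)

section AffineKernel

variable {V W : Type} [AddCommGroup V] [Module ℝ V] [AddCommGroup W] [Module ℝ W]

theorem affKer_prodRep (ρ : Representation ℝ G V) (σ : Representation ℝ G W) :
    affKer (prodRep ρ σ) = affKer ρ ∩ affKer σ := by
  have hsum : ∀ l : G → ℝ, ∑ g, l g • (prodRep ρ σ g : V × W →ₗ[ℝ] V × W)
      = (∑ g, l g • (ρ g : V →ₗ[ℝ] V)).prodMap (∑ g, l g • (σ g : W →ₗ[ℝ] W)) := by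
    intro l
    ext <;> simp [prodRep, LinearMap.sum_apply, Prod.fst_sum, Prod.snd_sum]
  ext l
  simp only [affKer, Set.mem_inter_iff, Set.mem_ofPred_eq, hsum, LinearMap.prodMap_eq_zero_iff]
  tauto

theorem RepIso.affKer_eq {ρ : Representation ℝ G V} {σ : Representation ℝ G W}
    (h : RepIso ρ σ) : affKer ρ = affKer σ := by
  obtain ⟨e, he⟩ := h
  have hconj : ∀ l : G → ℝ, ∑ g, l g • (σ g : W →ₗ[ℝ] W) = e.conj (∑ g, l g • ρ g) := by
    intro l
    simp only [map_sum, map_smul]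
    congr! 2 with g
    ext w
    simp [LinearEquiv.conj_apply, he]
  ext l
  simp only [affKer, Set.mem_ofPred_eq, hconj, LinearEquiv.map_eq_zero_iff]

theorem StablyEquivalent.affKer_subset {ρ₁ : Representation ℝ G V}
    {ρ₂ : Representation ℝ G W} (h : StablyEquivalent ρ₁ ρ₂) : affKer ρ₂ ⊆ affKer ρ₁ := by
  obtain ⟨V', _, _, ρ₁', W', _, _, ρ₂', -, h₂, hiso⟩ := h
  calc affKer ρ₂ = affKer (prodRep ρ₂ ρ₂') := by rw [affKer_prodRep, Set.inter_eq_left.2 h₂]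
    _ = affKer (prodRep ρ₁ ρ₁') := hiso.affKer_eq.symm
    _ ⊆ affKer ρ₁ := by rw [affKer_prodRep]; exact Set.inter_subset_left

end AffineKernel

def FiberSumsVanish {ι Q : Type*} [Fintype ι] (q : ι → Q) (l : ι → ℝ) : Prop :=
  ∀ z, ∑ i with q i = z, l i = 0

section FiberSums

variable {ι Q Q₁ Q₂ : Type*} [Fintype ι]

theorem FiberSumsVanish.sum_eq_zero {q : ι → Q} {l : ι → ℝ} (h : FiberSumsVanish q l) :
    ∑ i, l i = 0 := by
  rw [← Finset.sum_fiberwise_of_maps_to (t := univ.image q)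
    fun i _ => mem_image_of_mem q (mem_univ i)]
  exact Finset.sum_eq_zero fun z _ => h z

theorem FiberSumsVanish.of_eq_iff_eq {q₁ : ι → Q₁} {q₂ : ι → Q₂} {l : ι → ℝ}
    (h : ∀ i j, q₁ i = q₁ j ↔ q₂ i = q₂ j) (hl : FiberSumsVanish q₁ l) :
    FiberSumsVanish q₂ l := by
  intro z
  by_cases hz : ∃ j, q₂ j = z
  · obtain ⟨j, rfl⟩ := hz
    simpa only [h] using hl (q₁ j)
  · simp only [not_exists] at hz
    exact Finset.sum_eq_zero fun i hi => absurd (Finset.mem_filter.1 hi).2 (hz i)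

theorem fiberSumsVanish_iff_of_eq_iff_eq {q₁ : ι → Q₁} {q₂ : ι → Q₂}
    (h : ∀ i j, q₁ i = q₁ j ↔ q₂ i = q₂ j) (l : ι → ℝ) :
    FiberSumsVanish q₁ l ↔ FiberSumsVanish q₂ l :=
  ⟨.of_eq_iff_eq h, .of_eq_iff_eq fun i j => (h i j).symm⟩

theorem MonoidHom.sum_eq_zero_of_mul_right_invariant {Γ R : Type*} [Group Γ] [CommRing R]
    [NoZeroDivisors R] (χ : Γ →* R) {s : Finset Γ} {x : Γ} (hx : χ x ≠ 1)
    (hs : ∀ g, g * x ∈ s ↔ g ∈ s) : ∑ g ∈ s, χ g = 0 := by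
  have h : (∑ g ∈ s, χ g) * χ x = ∑ g ∈ s, χ g := by
    simp only [Finset.sum_mul, ← map_mul]
    exact Finset.sum_equiv (Equiv.mulRight x) (fun g => (hs g).symm) fun g _ => rfl
  have h' : (∑ g ∈ s, χ g) * (χ x - 1) = 0 := by rw [mul_sub, mul_one, h, sub_self]
  exact (mul_eq_zero.1 h').resolve_right (sub_ne_zero.2 hx)

theorem fiberSumsVanish_re_of_mul_right_invariant {Γ : Type*} [Group Γ] [Fintype Γ]
    (χ : Γ →* ℂ) {q : Γ → Q} {x : Γ} (hx : χ x ≠ 1) (hq : ∀ g, q (g * x) = q g) :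
    FiberSumsVanish q fun g => (χ g).re := by
  intro z
  rw [← Complex.re_sum, χ.sum_eq_zero_of_mul_right_invariant hx fun g => by simp [hq],
    Complex.zero_re]

end FiberSums

theorem permMat_sumCongr {α β : Type} (σ : Equiv.Perm α) (τ : Equiv.Perm β) :
    permMat (σ.sumCongr τ) = Matrix.fromBlocks (permMat σ) 0 0 (permMat τ) := by
  ext (i | i) (j | j) <;> simp [permMat]

theorem sum_smul_fromBlocks {ι α β : Type} [Fintype ι] (l : ι → ℝ) (A : ι → Matrix α α ℝ)
    (D : ι → Matrix β β ℝ) :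
    ∑ i, l i • Matrix.fromBlocks (A i) 0 0 (D i) =
      Matrix.fromBlocks (∑ i, l i • A i) 0 0 (∑ i, l i • D i) := by
  ext (i | i) (j | j) <;> simp [Matrix.sum_apply]

theorem mem_affKer_permRep_iff {α : Type} [Fintype α] (π : G →* Equiv.Perm α) (l : G → ℝ) :
    l ∈ affKer (permRep π) ↔ ∑ g, l g • permMat (π g) = 0 ∧ ∑ g, l g = 0 := by
  have h : ∑ g, l g • (permRep π g : (α → ℝ) →ₗ[ℝ] α → ℝ)
      = Matrix.toLin' (∑ g, l g • permMat (π g)) := by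
    simp only [map_sum, map_smul, Matrix.toLin'_apply']
    rfl
  rw [affKer, Set.mem_ofPred_eq, h, LinearEquiv.map_eq_zero_iff]

section CosetPerm

variable {Γ ι : Type} [Group Γ] [Fintype ι]

noncomputable def cosetPerm (H K : Subgroup Γ) : Γ →* Equiv.Perm ((Γ ⧸ H) ⊕ (Γ ⧸ K)) :=
  (Equiv.Perm.sumCongrHom (Γ ⧸ H) (Γ ⧸ K)).comp
    ((MulAction.toPermHom Γ (Γ ⧸ H)).prod (MulAction.toPermHom Γ (Γ ⧸ K)))

theorem cosetPerm_apply (H K : Subgroup Γ) (g : Γ) :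
    cosetPerm H K g = (MulAction.toPerm g).sumCongr (MulAction.toPerm g) := rfl

theorem cosetPerm_injective {H K : Subgroup Γ} (h : Disjoint H K) :
    Function.Injective (cosetPerm H K) := by
  refine (injective_iff_map_eq_one _).2 fun g hg => Subgroup.disjoint_def.1 h ?_ ?_
  · simpa [cosetPerm_apply, QuotientGroup.eq] using congr($hg (Sum.inl ((1 : Γ) : Γ ⧸ H)))
  · simpa [cosetPerm_apply, QuotientGroup.eq] using congr($hg (Sum.inr ((1 : Γ) : Γ ⧸ K)))

theorem QuotientGroup.eq_smul_iff_coe_eq_mul_inv (H : Subgroup Γ) [H.Normal] (g : Γ)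
    (x y : Γ ⧸ H) : x = g • y ↔ (g : Γ ⧸ H) = x * y⁻¹ := by
  induction y using QuotientGroup.induction_on with
  | H b =>
    rw [MulAction.Quotient.smul_mk, smul_eq_mul, QuotientGroup.mk_mul, eq_mul_inv_iff_mul_eq,
      eq_comm]

theorem sum_smul_permMat_toPerm_apply (H : Subgroup Γ) [H.Normal] (u : ι → Γ) (l : ι → ℝ)
    (x y : Γ ⧸ H) :
    (∑ i, l i • permMat (MulAction.toPerm (u i) : Equiv.Perm (Γ ⧸ H))) x y
      = ∑ i with (u i : Γ ⧸ H) = x * y⁻¹, l i := by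
  simp [Matrix.sum_apply, permMat, Finset.sum_filter, QuotientGroup.eq_smul_iff_coe_eq_mul_inv]

theorem sum_smul_permMat_toPerm_eq_zero_iff (H : Subgroup Γ) [H.Normal] (u : ι → Γ)
    (l : ι → ℝ) :
    ∑ i, l i • permMat (MulAction.toPerm (u i) : Equiv.Perm (Γ ⧸ H)) = 0 ↔
      FiberSumsVanish (fun i => (u i : Γ ⧸ H)) l := by
  refine ⟨fun h z => ?_, fun h => Matrix.ext fun x y => ?_⟩
  · simpa [sum_smul_permMat_toPerm_apply] using congr($h z 1)
  · simpa [sum_smul_permMat_toPerm_apply] using h (x * y⁻¹)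

theorem sum_smul_permMat_cosetPerm_eq_zero_iff (H K : Subgroup Γ) [H.Normal] [K.Normal]
    (u : ι → Γ) (l : ι → ℝ) :
    ∑ i, l i • permMat (cosetPerm H K (u i)) = 0 ↔
      FiberSumsVanish (fun i => (u i : Γ ⧸ H)) l ∧ FiberSumsVanish (fun i => (u i : Γ ⧸ K)) l := by
  simp only [cosetPerm_apply, permMat_sumCongr, sum_smul_fromBlocks, ← Matrix.fromBlocks_zero,
    Matrix.fromBlocks_inj, sum_smul_permMat_toPerm_eq_zero_iff, true_and]

theorem mem_affKer_permRep_cosetPerm_comp_iff [Fintype Γ] (H K : Subgroup Γ) [H.Normal]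
    [K.Normal] (f : G →* Γ) (l : G → ℝ) :
    l ∈ affKer ((permRep (cosetPerm H K)).comp f) ↔
      FiberSumsVanish (fun g => (f g : Γ ⧸ H)) l ∧ FiberSumsVanish (fun g => (f g : Γ ⧸ K)) l := by
  rw [show (permRep (cosetPerm H K)).comp f = permRep ((cosetPerm H K).comp f) from rfl,
    mem_affKer_permRep_iff]
  simp only [MonoidHom.comp_apply, sum_smul_permMat_cosetPerm_eq_zero_iff]
  exact and_iff_left_of_imp fun h => h.1.sum_eq_zero

end CosetPerm

theorem piOne_eq_cosetPerm : piOne = cosetPerm subA subBC := rfl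

theorem piTwo_eq_cosetPerm : piTwo = cosetPerm subB subAC := rfl
theorem mem_subA_iff {g : GEx} : g ∈ subA ↔ g.toAdd.2 = 0 := by
  simp [subA, AddSubgroup.mem_prod]

theorem mem_subBC_iff {g : GEx} : g ∈ subBC ↔ g.toAdd.1 = 0 := by
  simp [subBC, AddSubgroup.mem_prod]

theorem mem_subB_iff {g : GEx} : g ∈ subB ↔ g.toAdd.1 = 0 ∧ g.toAdd.2.2 = 0 := by
  simp [subB, AddSubgroup.mem_prod]

theorem mem_subAC_iff {g : GEx} : g ∈ subAC ↔ g.toAdd.2.1 = 0 := by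
  simp [subAC, AddSubgroup.mem_prod]

theorem disjoint_subA_subBC : Disjoint subA subBC :=
  Subgroup.disjoint_def.2 fun hA hBC =>
    Multiplicative.toAdd.injective (Prod.ext (mem_subBC_iff.1 hBC) (mem_subA_iff.1 hA))

theorem disjoint_subB_subAC : Disjoint subB subAC :=
  Subgroup.disjoint_def.2 fun hB hAC =>
    Multiplicative.toAdd.injective
      (Prod.ext (mem_subB_iff.1 hB).1 (Prod.ext (mem_subAC_iff.1 hAC) (mem_subB_iff.1 hB).2))

theorem coe_eq_coe_subA_iff {g g' : GEx} : (g : GEx ⧸ subA) = g' ↔ g.toAdd.2 = g'.toAdd.2 := by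
  simp [QuotientGroup.eq, mem_subA_iff, neg_add_eq_zero]

theorem coe_eq_coe_subBC_iff {g g' : GEx} : (g : GEx ⧸ subBC) = g' ↔ g.toAdd.1 = g'.toAdd.1 := by
  simp [QuotientGroup.eq, mem_subBC_iff, neg_add_eq_zero]

theorem coe_eq_coe_subB_iff {g g' : GEx} :
    (g : GEx ⧸ subB) = g' ↔ g.toAdd.1 = g'.toAdd.1 ∧ g.toAdd.2.2 = g'.toAdd.2.2 := by
  simp [QuotientGroup.eq, mem_subB_iff, neg_add_eq_zero]

theorem coe_eq_coe_subAC_iff {g g' : GEx} :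
    (g : GEx ⧸ subAC) = g' ↔ g.toAdd.2.1 = g'.toAdd.2.1 := by
  simp [QuotientGroup.eq, mem_subAC_iff, neg_add_eq_zero]

noncomputable def zmodFourEquiv : ZMod 4 ≃ ZMod 2 × ZMod 2 := Fintype.equivOfCardEq (by simp)

noncomputable def cosetSwap : GEx ≃ GEx :=
  Function.Involutive.toPerm
    (fun g => Multiplicative.ofAdd
      (zmodFourEquiv g.toAdd.2.1, zmodFourEquiv.symm g.toAdd.1, g.toAdd.2.2))
    (fun g => by simp)

theorem toAdd_cosetSwap (g : GEx) :
    (cosetSwap g).toAdd =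
      (zmodFourEquiv g.toAdd.2.1, zmodFourEquiv.symm g.toAdd.1, g.toAdd.2.2) :=
  rfl

theorem coe_cosetSwap_eq_coe_subB_iff (g g' : GEx) :
    (cosetSwap g : GEx ⧸ subB) = cosetSwap g' ↔ (g : GEx ⧸ subA) = g' := by
  simp [toAdd_cosetSwap, coe_eq_coe_subA_iff, coe_eq_coe_subB_iff, Prod.ext_iff]

theorem coe_cosetSwap_eq_coe_subAC_iff (g g' : GEx) :
    (cosetSwap g : GEx ⧸ subAC) = cosetSwap g' ↔ (g : GEx ⧸ subBC) = g' := by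
  simp [toAdd_cosetSwap, coe_eq_coe_subBC_iff, coe_eq_coe_subAC_iff]

theorem affinelyEquivalent_permPolytope_piOne_piTwo :
    AffinelyEquivalent
      (convexHull ℝ (Set.range fun g : GEx => permMat (piOne g)))
      (convexHull ℝ (Set.range fun g : GEx => permMat (piTwo g))) := by
  rw [← cosetSwap.surjective.range_comp fun g => permMat (piTwo g)]
  refine affinelyEquivalent_convexHull_range_of_ker_eq _ _ fun c => ?_
  simp only [Function.comp_apply]
  rw [piOne_eq_cosetPerm, piTwo_eq_cosetPerm,
    sum_smul_permMat_cosetPerm_eq_zero_iff subA subBC (fun g => g),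
    sum_smul_permMat_cosetPerm_eq_zero_iff subB subAC cosetSwap,
    fiberSumsVanish_iff_of_eq_iff_eq (fun g g' => (coe_cosetSwap_eq_coe_subB_iff g g').symm),
    fiberSumsVanish_iff_of_eq_iff_eq (fun g g' => (coe_cosetSwap_eq_coe_subAC_iff g g').symm)]

theorem isPrimitiveRoot_exp_two_pi_I_div_twelve :
    IsPrimitiveRoot (Complex.exp (2 * Real.pi * Complex.I / 12)) 12 := by
  simpa using Complex.isPrimitiveRoot_exp 12 (by norm_num)

/-- `(b, c) ↦ 3b + 4c` is the isomorphism `ℤ/4 × ℤ/3 ≅ ℤ/12`, so the kernel of `chi` is `A`. -/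
noncomputable def chi : GEx →* ℂ where
  toFun g :=
    Complex.exp (2 * Real.pi * Complex.I / 12) ^ (3 * g.toAdd.2.1.val + 4 * g.toAdd.2.2.val)
  map_one' := by simp
  map_mul' g h := by
    rw [← pow_add]
    refine pow_eq_pow_of_modEq ?_ isPrimitiveRoot_exp_two_pi_I_div_twelve.pow_eq_one
    simp only [toAdd_mul, Prod.snd_add, Prod.fst_add, ZMod.val_add, Nat.ModEq]
    omega

theorem chi_apply (g : GEx) :
    chi g =
      Complex.exp (2 * Real.pi * Complex.I / 12) ^ (3 * g.toAdd.2.1.val + 4 * g.toAdd.2.2.val) :=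
  rfl

theorem chi_eq_one_iff {g : GEx} : chi g = 1 ↔ g ∈ subA := by
  rw [mem_subA_iff, chi_apply, isPrimitiveRoot_exp_two_pi_I_div_twelve.pow_eq_one_iff_dvd,
    Prod.ext_iff, Prod.fst_zero, Prod.snd_zero, ← ZMod.val_eq_zero, ← ZMod.val_eq_zero]
  have := ZMod.val_lt g.toAdd.2.1
  have := ZMod.val_lt g.toAdd.2.2
  omega

theorem mul_self_eq_one_of_mem_subA {g : GEx} (h : g ∈ subA) : g * g = 1 := by
  refine Multiplicative.toAdd.injective (Prod.ext ?_ ?_)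
  · exact (by decide : ∀ a : ZMod 2 × ZMod 2, a + a = 0) _
  · simp [mem_subA_iff.1 h]

theorem fiberSumsVanish_re_chi_comp (φ : GEx ≃* GEx) {H : Subgroup GEx} {y : GEx}
    (hy : y ∈ H) (hyy : y * y ≠ 1) :
    FiberSumsVanish (fun g => (φ g : GEx ⧸ H)) fun g => (chi g).re := by
  refine fiberSumsVanish_re_of_mul_right_invariant chi (x := φ.symm y) ?_ fun g => ?_
  · rw [ne_eq, chi_eq_one_iff]
    intro hA
    exact hyy (by simpa using congr(φ $(mul_self_eq_one_of_mem_subA hA)))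
  · rw [map_mul, MulEquiv.apply_symm_apply]
    exact QuotientGroup.mk_mul_of_mem _ hy

theorem not_fiberSumsVanish_re_chi :
    ¬ FiberSumsVanish (fun g : GEx => (g : GEx ⧸ subA)) fun g => (chi g).re := by
  refine fun h => (Finset.sum_pos (fun g hg => ?_) ⟨1, by simp⟩).ne' (h 1)
  have hA : g ∈ subA := (QuotientGroup.eq_one_iff g).1 (by simpa using hg)
  simp [chi_eq_one_iff.2 hA]

/-- The example. Both `π₁` and `π₂` are faithful, the permutation
polytopes `P(π₁)` and `P(π₂)` are affinely equivalent, but `(G, π₁)` and `(G, π₂)`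
are not effectively equivalent: no automorphism `φ` of `G` makes `Π₁` and `Π₂ ∘ φ`
stably equivalent. -/
theorem example_affinelyEquivalent_but_not_effectivelyEquivalent :
    Function.Injective piOne ∧ Function.Injective piTwo ∧
    AffinelyEquivalent
      (convexHull ℝ (Set.range fun g : GEx => permMat (piOne g)))
      (convexHull ℝ (Set.range fun g : GEx => permMat (piTwo g))) ∧
    ¬ ∃ φ : GEx ≃* GEx,
        StablyEquivalent (permRep piOne) ((permRep piTwo).comp φ.toMonoidHom) := by
  refine ⟨cosetPerm_injective disjoint_subA_subBC, cosetPerm_injective disjoint_subB_subAC,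
    affinelyEquivalent_permPolytope_piOne_piTwo, ?_⟩
  rintro ⟨φ, hφ⟩
  have h₂ : (fun g => (chi g).re) ∈ affKer ((permRep piTwo).comp φ.toMonoidHom) :=
    (mem_affKer_permRep_cosetPerm_comp_iff subB subAC φ.toMonoidHom _).2
      ⟨fiberSumsVanish_re_chi_comp φ (y := Multiplicative.ofAdd ((0, 0), 1, 0))
        (mem_subB_iff.2 ⟨rfl, rfl⟩) (by decide),
      fiberSumsVanish_re_chi_comp φ (y := Multiplicative.ofAdd ((0, 0), 0, 1))
        (mem_subAC_iff.2 rfl) (by decide)⟩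
  exact not_fiberSumsVanish_re_chi
    ((mem_affKer_permRep_cosetPerm_comp_iff subA subBC (MonoidHom.id GEx) _).1
      (hφ.affKer_subset h₂)).1
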